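/- Let L be a partial group which is the internal semidirect product of a partial subgroup X with a partial subgroup N, and let M ⊆ N be a partial normal subgroup of L. Then C_X(N)·M = {Π(y,m) : y ∈ C_X(N), m ∈ M} is a partial normal subgroup of L. In particular, C_X(N) and C_X(N)·N are partial normal subgroups of L. -/
import Mathlib


universe u v

/-- A partial group: a set `L` with a domain `D ⊆ W(L)` of words, a (total extension of the)
partial product `Pi`, and an involutory inversion, satisfying axioms (PG1)-(PG4).
The value of `Pi` outside `D` is irrelevant. -/
structure PartialGroup (L : Type u) : Type u where
  D : Set (List L)
  Pi : List L → L
  inv : L → L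
  inv_inv : ∀ g, inv (inv g) = g
  singleton_mem : ∀ g, [g] ∈ D
  append_left_mem : ∀ {u v : List L}, u ++ v ∈ D → u ∈ D
  append_right_mem : ∀ {u v : List L}, u ++ v ∈ D → v ∈ D
  Pi_singleton : ∀ g, Pi [g] = g
  pg3_mem : ∀ u v w : List L, u ++ v ++ w ∈ D → u ++ [Pi v] ++ w ∈ D
  pg3_eq : ∀ u v w : List L, u ++ v ++ w ∈ D → Pi (u ++ v ++ w) = Pi (u ++ [Pi v] ++ w)
  pg4_mem : ∀ w ∈ D, (List.map inv w).reverse ++ w ∈ D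
  pg4_eq : ∀ w ∈ D, Pi ((List.map inv w).reverse ++ w) = Pi []

namespace PartialGroup

variable {L : Type u} {L' : Type v}

/-- Inversion of a word: `(g_1,...,g_k)⁻¹ = (g_k⁻¹,...,g_1⁻¹)`. -/
def wInv (P : PartialGroup L) (w : List L) : List L := (w.map P.inv).reverse

/-- The identity `1 = Π(∅)`. -/
def one (P : PartialGroup L) : L := P.Pi []

/-- Conjugation `x^g = Π(g⁻¹, x, g)`. -/
def cnj (P : PartialGroup L) (g x : L) : L := P.Pi [P.inv g, x, g]

/-- `x ∈ D(g)`, i.e. `(g⁻¹, x, g) ∈ D(L)`. -/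
def memD (P : PartialGroup L) (g x : L) : Prop := [P.inv g, x, g] ∈ P.D

/-- `H` is a partial subgroup of `L`. -/
def IsPartialSubgroup (P : PartialGroup L) (H : Set L) : Prop :=
  H.Nonempty ∧ (∀ g ∈ H, P.inv g ∈ H) ∧ ∀ w ∈ P.D, (∀ x ∈ w, x ∈ H) → P.Pi w ∈ H

/-- `N` is a partial normal subgroup of `L`. -/
def IsPartialNormal (P : PartialGroup L) (N : Set L) : Prop :=
  P.IsPartialSubgroup N ∧ ∀ g : L, ∀ n ∈ N, P.memD g n → P.cnj g n ∈ N

/-- `H` is a subgroup of `L`: a partial subgroup with `W(H) ⊆ D(L)`. -/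
def IsSubgroup (P : PartialGroup L) (H : Set L) : Prop :=
  P.IsPartialSubgroup H ∧ ∀ w : List L, (∀ x ∈ w, x ∈ H) → w ∈ P.D

/-- Homomorphism of partial groups. -/
def IsHom (P : PartialGroup L) (P' : PartialGroup L') (φ : L → L') : Prop :=
  ∀ w ∈ P.D, w.map φ ∈ P'.D ∧ φ (P.Pi w) = P'.Pi (w.map φ)

/-- Isomorphism of partial groups: a bijective homomorphism with `D(L)^φ = D(L')`. -/
def IsIso (P : PartialGroup L) (P' : PartialGroup L') (φ : L → L') : Prop :=
  Function.Bijective φ ∧ P.IsHom P' φ ∧ List.map φ '' P.D = P'.D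

end PartialGroup

open PartialGroup

/-- For a list of pairs `((x₁,n₁),...,(xₖ,nₖ))` (with `xᵢ ∈ X`, `nᵢ ∈ N`), the word
`w_N = (n₁^{Π(x₂,...,xₖ)}, n₂^{Π(x₃,...,xₖ)}, ..., nₖ)`. -/
def sdn {L : Type u} (P : PartialGroup L) : List (L × L) → List L
  | [] => []
  | q :: rest => P.cnj (P.Pi (rest.map Prod.fst)) q.2 :: sdn P rest

/-- `L` is the internal semidirect product of the partial subgroup `X` with the partial
subgroup `N`: axioms (SD1), (SD2), (SD3). -/
structure IsIntSemidirect {L : Type u} (P : PartialGroup L) (X N : Set L) : Prop where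
  subX : P.IsPartialSubgroup X
  subN : P.IsPartialSubgroup N
  sd1 : ∀ x ∈ X, (∀ n ∈ N, P.memD x n) ∧ P.cnj x '' N = N
  sd2 : ∀ g : L, ∃! q : L × L, q.1 ∈ X ∧ q.2 ∈ N ∧ [q.1, q.2] ∈ P.D ∧ g = P.Pi [q.1, q.2]
  sd3 : ∀ q : List (L × L), (∀ r ∈ q, r.1 ∈ X ∧ r.2 ∈ N) →
      ((q.map fun r => P.Pi [r.1, r.2]) ∈ P.D ↔
        q.map Prod.fst ∈ P.D ∧ sdn P q ∈ P.D) ∧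
      ((q.map fun r => P.Pi [r.1, r.2]) ∈ P.D →
        P.Pi (q.map fun r => P.Pi [r.1, r.2]) =
          P.Pi [P.Pi (q.map Prod.fst), P.Pi (sdn P q)])

namespace PGLemmas

open PartialGroup

variable {L : Type u} (P : PartialGroup L)

lemma invg_g (g : L) : [P.inv g, g] ∈ P.D ∧ P.Pi [P.inv g, g] = P.one :=
  ⟨P.pg4_mem [g] (P.singleton_mem g), P.pg4_eq [g] (P.singleton_mem g)⟩

lemma g_invg (g : L) : [g, P.inv g] ∈ P.D ∧ P.Pi [g, P.inv g] = P.one := by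
  have h := invg_g P (P.inv g)
  rwa [P.inv_inv] at h

lemma Pi_pair_one (a : L) : P.Pi [a, P.one] = a :=
  ((P.pg3_eq [a] [] [] (P.singleton_mem a)).symm.trans (P.Pi_singleton a))

lemma pair_one_D (a : L) : [a, P.one] ∈ P.D :=
  P.pg3_mem [a] [] [] (P.singleton_mem a)

lemma one_cons {w : List L} (hw : w ∈ P.D) :
    (P.one :: w) ∈ P.D ∧ P.Pi (P.one :: w) = P.Pi w :=
  ⟨P.pg3_mem [] [] w hw, (P.pg3_eq [] [] w hw).symm⟩

lemma Pi_one_cons (z : L) : P.Pi [P.one, z] = z :=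
  ((one_cons P (P.singleton_mem z)).2).trans (P.Pi_singleton z)

lemma one_pair_D (z : L) : [P.one, z] ∈ P.D := (one_cons P (P.singleton_mem z)).1

lemma inv_one : P.inv P.one = P.one :=
  (Pi_pair_one P (P.inv P.one)).symm.trans (invg_g P P.one).2

lemma cancel {a b : L} (hab : [a, b] ∈ P.D) (h1 : P.Pi [a, b] = P.one) :
    b = P.inv a := by
  have h4 : [P.inv b, P.inv a, a, b] ∈ P.D := P.pg4_mem [a, b] hab
  have hs : [P.inv a, a, b] ∈ P.D := P.append_right_mem (u := [P.inv b]) h4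
  have e1 : P.Pi [P.inv a, a, b] = P.inv a := by
    have e := P.pg3_eq [P.inv a] [a, b] [] hs
    rw [h1] at e
    exact e.trans (Pi_pair_one P (P.inv a))
  have e2 : P.Pi [P.inv a, a, b] = b := by
    have e := P.pg3_eq [] [P.inv a, a] [b] hs
    rw [(invg_g P a).2] at e
    exact e.trans (Pi_one_cons P b)
  exact e2.symm.trans e1

lemma Pi_append {u v : List L} (huv : u ++ v ∈ P.D) :
    [P.Pi u, P.Pi v] ∈ P.D ∧ P.Pi (u ++ v) = P.Pi [P.Pi u, P.Pi v] := by
  have h1 : [P.Pi u] ++ v ∈ P.D := P.pg3_mem [] u v huv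
  have e1 : P.Pi (u ++ v) = P.Pi ([P.Pi u] ++ v) := P.pg3_eq [] u v huv
  have h1' : [P.Pi u] ++ v ++ [] ∈ P.D := by simpa using h1
  have h2 : [P.Pi u, P.Pi v] ∈ P.D := P.pg3_mem [P.Pi u] v [] h1'
  have e2 : P.Pi ([P.Pi u] ++ v ++ []) = P.Pi ([P.Pi u] ++ [P.Pi v] ++ []) :=
    P.pg3_eq [P.Pi u] v [] h1'
  refine ⟨h2, e1.trans ?_⟩
  have : ([P.Pi u] ++ v ++ []) = [P.Pi u] ++ v := by simp
  rw [this] at e2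
  exact e2

lemma inv_Pi_pair {x y : L} (hxy : [x, y] ∈ P.D) :
    P.Pi [P.inv y, P.inv x] = P.inv (P.Pi [x, y]) ∧ [P.inv y, P.inv x] ∈ P.D := by
  have h4 : [P.inv y, P.inv x, x, y] ∈ P.D := P.pg4_mem [x, y] hxy
  have h4' : [P.inv y, P.inv x] ++ [x, y] ∈ P.D := h4
  have hp := Pi_append P h4'
  have hone : P.Pi [P.inv y, P.inv x, x, y] = P.one := P.pg4_eq [x, y] hxy
  have hPi : P.Pi [P.Pi [P.inv y, P.inv x], P.Pi [x, y]] = P.one := by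
    have := hp.2
    exact this.symm.trans hone
  have hb := cancel P hp.1 hPi
  constructor
  · rw [hb, P.inv_inv]
  · exact P.append_left_mem (u := [P.inv y, P.inv x]) (v := [x, y]) h4

lemma cnj_one (g : L) : P.cnj g P.one = P.one :=
  ((P.pg3_eq [P.inv g] [] [g] (invg_g P g).1).symm).trans (invg_g P g).2

lemma cnj_one_left (n : L) : P.cnj P.one n = n := by
  show P.Pi [P.inv P.one, n, P.one] = n
  rw [inv_one P]
  have ha := one_cons P (P.singleton_mem n)
  have hb := P.pg3_eq [P.one, n] [] [] ha.1
  exact hb.symm.trans (ha.2.trans (P.Pi_singleton n))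

lemma cnj_Pi_nil (n : L) : P.cnj (P.Pi []) n = n := cnj_one_left P n

lemma cnj_inv_cnj {g x : L} (hg : [P.inv g, x, g] ∈ P.D) :
    [g, P.cnj g x, P.inv g] ∈ P.D ∧ P.Pi [g, P.cnj g x, P.inv g] = x := by
  have h6 : [P.inv g, P.inv x, g, P.inv g, x, g] ∈ P.D := by
    have := P.pg4_mem [P.inv g, x, g] hg
    simpa [P.inv_inv] using this
  have h12 : [P.inv g, P.inv x, g, P.inv g, x, g, P.inv g, P.inv x, g, P.inv g, x, g] ∈ P.D := by
    have := P.pg4_mem _ h6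
    simpa [P.inv_inv] using this
  have h10 : [g, P.inv g, x, g, P.inv g, P.inv x, g, P.inv g, x, g] ∈ P.D :=
    P.append_right_mem (u := [P.inv g, P.inv x]) h12
  have h5 : [g, P.inv g, x, g, P.inv g] ∈ P.D :=
    P.append_left_mem (u := [g, P.inv g, x, g, P.inv g]) (v := [P.inv x, g, P.inv g, x, g]) h10
  constructor
  · exact P.pg3_mem [g] [P.inv g, x, g] [P.inv g] h5
  · have e1 : P.Pi [g, P.inv g, x, g, P.inv g] = P.Pi [g, P.cnj g x, P.inv g] :=
      P.pg3_eq [g] [P.inv g, x, g] [P.inv g] h5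
    have e2 := P.pg3_eq [] [g, P.inv g] [x, g, P.inv g] h5
    rw [(g_invg P g).2] at e2
    have hs3 : [x, g, P.inv g] ∈ P.D := P.append_right_mem (u := [g, P.inv g]) h5
    have e3 : P.Pi [P.one, x, g, P.inv g] = P.Pi [x, g, P.inv g] := (one_cons P hs3).2
    have e4 := P.pg3_eq [x] [g, P.inv g] [] hs3
    rw [(g_invg P g).2] at e4
    have e4' : P.Pi ([x] ++ [g, P.inv g] ++ []) = P.Pi [x, P.one] := by
      have : ([x] ++ [P.one] ++ [] : List L) = [x, P.one] := by simp
      rw [← this]; exact e4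
    exact e1.symm.trans (e2.trans (e3.trans (e4'.trans (Pi_pair_one P x))))

lemma Pi_all_one : ∀ (w : List L), w ∈ P.D → (∀ z ∈ w, z = P.one) → P.Pi w = P.one := by
  intro w
  induction w with
  | nil => intro _ _; rfl
  | cons z t ih =>
    intro hw hall
    have hz : z = P.one := hall z (by simp)
    have ht : t ∈ P.D := P.append_right_mem (u := [z]) hw
    subst hz
    exact ((one_cons P ht).2).trans (ih ht fun z hz => hall z (by simp [hz]))

end PGLemmas
namespace PGLemmas

variable {L : Type u} {P : PartialGroup L} {X N : Set L}

lemma one_mem_sub {H : Set L} (hH : P.IsPartialSubgroup H) : P.one ∈ H := by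
  obtain ⟨g, hg⟩ := hH.1
  have hig := hH.2.1 g hg
  have := hH.2.2 [P.inv g, g] (invg_g P g).1 (by
    intro z hz
    simp only [List.mem_cons, List.mem_singleton, List.not_mem_nil, or_false] at hz
    rcases hz with rfl | rfl <;> assumption)
  rwa [(invg_g P g).2] at this

section SD
variable (h : IsIntSemidirect P X N)
include h

lemma memD_of_X {x n : L} (hx : x ∈ X) (hn : n ∈ N) : [P.inv x, n, x] ∈ P.D :=
  (h.sd1 x hx).1 n hn

lemma cnj_mem_N {x n : L} (hx : x ∈ X) (hn : n ∈ N) : P.cnj x n ∈ N := by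
  have himg := (h.sd1 x hx).2
  rw [← himg]
  exact ⟨n, hn, rfl⟩

lemma pairD {x n : L} (hx : x ∈ X) (hn : n ∈ N) : [x, n] ∈ P.D := by
  have himg := (h.sd1 x hx).2
  have hn' : n ∈ P.cnj x '' N := by rw [himg]; exact hn
  obtain ⟨n₀, hn₀, rfl⟩ := hn'
  have hm := memD_of_X h hx hn₀
  have h6 : [P.inv x, P.inv n₀, x, P.inv x, n₀, x] ∈ P.D := by
    have := P.pg4_mem _ hm
    simpa [P.inv_inv] using this
  have h4 : [x, P.inv x, n₀, x] ∈ P.D := P.append_right_mem (u := [P.inv x, P.inv n₀]) h6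
  exact P.pg3_mem [x] [P.inv x, n₀, x] [] h4

lemma uniq_pair {x₁ x₂ n₁ n₂ : L} (hx₁ : x₁ ∈ X) (hx₂ : x₂ ∈ X) (hn₁ : n₁ ∈ N)
    (hn₂ : n₂ ∈ N) (hD₁ : [x₁, n₁] ∈ P.D) (hD₂ : [x₂, n₂] ∈ P.D)
    (heq : P.Pi [x₁, n₁] = P.Pi [x₂, n₂]) : x₁ = x₂ ∧ n₁ = n₂ := by
  obtain ⟨q, _, huniq⟩ := h.sd2 (P.Pi [x₂, n₂])
  have e₁ := huniq (x₁, n₁) ⟨hx₁, hn₁, hD₁, heq.symm⟩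
  have e₂ := huniq (x₂, n₂) ⟨hx₂, hn₂, hD₂, rfl⟩
  have := e₁.trans e₂.symm
  exact ⟨congrArg Prod.fst this, congrArg Prod.snd this⟩

lemma invFact {x n : L} (hx : x ∈ X) (hn : n ∈ N) :
    ∃ n' ∈ N, P.inv (P.Pi [x, n]) = P.Pi [P.inv x, n'] ∧ P.cnj x n' = P.inv n := by
  obtain ⟨⟨x', n'⟩, ⟨hx', hn', hD', hEq'⟩, _⟩ := h.sd2 (P.inv (P.Pi [x, n]))
  have hq2 : ∀ r ∈ [(x', n'), (x, n)], r.1 ∈ X ∧ r.2 ∈ N := by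
    intro r hr
    simp only [List.mem_cons, List.mem_singleton, List.not_mem_nil, or_false] at hr
    rcases hr with rfl | rfl
    · exact ⟨hx', hn'⟩
    · exact ⟨hx, hn⟩
  have hmapD : ([(x', n'), (x, n)].map fun r => P.Pi [r.1, r.2]) ∈ P.D := by
    show [P.Pi [x', n'], P.Pi [x, n]] ∈ P.D
    rw [← hEq']
    exact (invg_g P (P.Pi [x, n])).1
  obtain ⟨hfst, hsdn⟩ := ((h.sd3 _ hq2).1).mp hmapD
  have hfst' : [x', x] ∈ P.D := hfst
  have hsdn_eq : sdn P [(x', n'), (x, n)] = [P.cnj x n', n] := by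
    simp [sdn, P.Pi_singleton, cnj_Pi_nil]
  rw [hsdn_eq] at hsdn
  have hprod := ((h.sd3 _ hq2).2) hmapD
  have hprod' : P.Pi [P.Pi [x', n'], P.Pi [x, n]] =
      P.Pi [P.Pi [x', x], P.Pi (sdn P [(x', n'), (x, n)])] := hprod
  rw [hsdn_eq, ← hEq'] at hprod'
  rw [(invg_g P (P.Pi [x, n])).2] at hprod'
  have hXmem : P.Pi [x', x] ∈ X := h.subX.2.2 [x', x] hfst' (by
    intro z hz
    simp only [List.mem_cons, List.mem_singleton, List.not_mem_nil, or_false] at hz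
    rcases hz with rfl | rfl <;> assumption)
  have hNmem : P.Pi [P.cnj x n', n] ∈ N := h.subN.2.2 _ hsdn (by
    intro z hz
    simp only [List.mem_cons, List.mem_singleton, List.not_mem_nil, or_false] at hz
    rcases hz with rfl | rfl
    · exact cnj_mem_N h hx hn'
    · exact hn)
  have h11D : [P.one, P.one] ∈ P.D := pair_one_D P P.one
  have h11e : P.Pi [P.one, P.one] = P.one := Pi_pair_one P P.one
  obtain ⟨e1, e2⟩ := uniq_pair h hXmem (one_mem_sub h.subX) hNmem (one_mem_sub h.subN)
    (pairD h hXmem hNmem) h11D (hprod'.symm.trans h11e.symm)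
  have ex : x = P.inv x' := cancel P hfst' e1
  have hx'inv : x' = P.inv x := by rw [ex, P.inv_inv]
  have en : n = P.inv (P.cnj x n') := cancel P hsdn e2
  have hcnj : P.cnj x n' = P.inv n := by rw [en, P.inv_inv]
  exact ⟨n', hn', by rw [hEq', hx'inv], hcnj⟩

lemma cnj_Pi_pair {x b n : L} (hx : x ∈ X) (hb : b ∈ X) (hD : [x, b] ∈ P.D) (hn : n ∈ N) :
    P.cnj (P.Pi [x, b]) n = P.cnj b (P.cnj x n) := by
  have hfst5 : [P.inv b, P.inv x, P.one, x, b] ∈ P.D := by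
    have h4 : [P.inv b, P.inv x, x, b] ∈ P.D := P.pg4_mem [x, b] hD
    exact P.pg3_mem [P.inv b, P.inv x] [] [x, b] h4
  set q5 : List (L × L) :=
    [(P.inv b, P.one), (P.inv x, P.one), (P.one, n), (x, P.one), (b, P.one)] with hq5def
  have hq5 : ∀ r ∈ q5, r.1 ∈ X ∧ r.2 ∈ N := by
    intro r hr
    have h1X := one_mem_sub h.subX
    have h1N := one_mem_sub h.subN
    simp only [hq5def, List.mem_cons, List.mem_singleton, List.not_mem_nil, or_false] at hr
    rcases hr with rfl | rfl | rfl | rfl | rfl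
    · exact ⟨h.subX.2.1 b hb, h1N⟩
    · exact ⟨h.subX.2.1 x hx, h1N⟩
    · exact ⟨h1X, hn⟩
    · exact ⟨hx, h1N⟩
    · exact ⟨hb, h1N⟩
  have hsdn_eq : sdn P q5 = [P.one, P.one, P.cnj (P.Pi [x, b]) n, P.one, P.one] := by
    simp [hq5def, sdn, cnj_one]
  have hsdn5 : sdn P q5 ∈ P.D := by
    rw [hsdn_eq]
    set z := P.cnj (P.Pi [x, b]) n
    have a2 : [P.one, z] ∈ P.D := one_pair_D P z
    have a3 : (P.one :: [P.one, z]) ∈ P.D := (one_cons P a2).1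
    have a4 : [P.one, P.one, z, P.one] ∈ P.D := P.pg3_mem [P.one, P.one, z] [] [] a3
    exact P.pg3_mem [P.one, P.one, z, P.one] [] [] a4
  have hfst5' : q5.map Prod.fst ∈ P.D := hfst5
  have hmap5 : (q5.map fun r => P.Pi [r.1, r.2]) ∈ P.D :=
    ((h.sd3 q5 hq5).1).mpr ⟨hfst5', hsdn5⟩
  have hW5 : [P.inv b, P.inv x, n, x, b] ∈ P.D := by
    have hmeq : (q5.map fun r => P.Pi [r.1, r.2]) = [P.inv b, P.inv x, n, x, b] := by
      simp [hq5def, Pi_pair_one, Pi_one_cons]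
    rwa [hmeq] at hmap5
  have eR : P.Pi [P.inv b, P.inv x, n, x, b] = P.Pi [P.inv b, P.cnj x n, b] :=
    P.pg3_eq [P.inv b] [P.inv x, n, x] [b] hW5
  have h4' : [P.inv b, P.inv x, n, P.Pi [x, b]] ∈ P.D :=
    P.pg3_mem [P.inv b, P.inv x, n] [x, b] [] hW5
  have eL1 : P.Pi [P.inv b, P.inv x, n, x, b] = P.Pi [P.inv b, P.inv x, n, P.Pi [x, b]] :=
    P.pg3_eq [P.inv b, P.inv x, n] [x, b] [] hW5
  have eL2 : P.Pi [P.inv b, P.inv x, n, P.Pi [x, b]] =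
      P.Pi [P.Pi [P.inv b, P.inv x], n, P.Pi [x, b]] :=
    P.pg3_eq [] [P.inv b, P.inv x] [n, P.Pi [x, b]] h4'
  have einv : P.Pi [P.inv b, P.inv x] = P.inv (P.Pi [x, b]) := (inv_Pi_pair P hD).1
  show P.Pi [P.inv (P.Pi [x, b]), n, P.Pi [x, b]] = P.Pi [P.inv b, P.cnj x n, b]
  rw [← einv]
  exact eL2.symm.trans (eL1.symm.trans eR)

lemma cnj_Pi_word : ∀ ws : List L, ws ∈ P.D → (∀ z ∈ ws, z ∈ X) → ∀ n ∈ N,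
    P.cnj (P.Pi ws) n = List.foldl (fun a z => P.cnj z a) n ws := by
  intro ws
  induction ws with
  | nil => intro _ _ n _; exact cnj_Pi_nil P n
  | cons z t ih =>
    intro hws hX n hn
    have ht : t ∈ P.D := P.append_right_mem (u := [z]) hws
    have hzX : z ∈ X := hX z (by simp)
    have htX : ∀ y ∈ t, y ∈ X := fun y hy => hX y (by simp [hy])
    have hPit : P.Pi t ∈ X := h.subX.2.2 t ht htX
    have happ := Pi_append P (u := [z]) (v := t) hws
    have hpe : P.Pi (z :: t) = P.Pi [z, P.Pi t] := by
      have := happ.2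
      rwa [P.Pi_singleton] at this
    have hD2 : [z, P.Pi t] ∈ P.D := by
      have := happ.1
      rwa [P.Pi_singleton] at this
    rw [hpe, cnj_Pi_pair h hzX hPit hD2 hn]
    have : List.foldl (fun a z => P.cnj z a) n (z :: t) =
        List.foldl (fun a z => P.cnj z a) (P.cnj z n) t := rfl
    rw [this]
    exact ih ht htX (P.cnj z n) (cnj_mem_N h hzX hn)

end SD
end PGLemmas
namespace PGLemmas

variable {L : Type u} {P : PartialGroup L} {X N : Set L}

lemma foldl_cnj_fix {P : PartialGroup L} {X N : Set L} :
    ∀ ws : List L, (∀ z ∈ ws, z ∈ X ∧ ∀ n ∈ N, P.cnj z n = n) → ∀ n ∈ N,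
      List.foldl (fun a z => P.cnj z a) n ws = n := by
  intro ws
  induction ws with
  | nil => intro _ n _; rfl
  | cons z t ih =>
    intro hc n hn
    have hz := hc z (by simp)
    show List.foldl (fun a z => P.cnj z a) (P.cnj z n) t = n
    rw [hz.2 n hn]
    exact ih (fun y hy => hc y (by simp [hy])) n hn

lemma exists_factor_list {P : PartialGroup L} (A B : Set L) :
    ∀ w : List L, (∀ g ∈ w, ∃ y ∈ A, ∃ m ∈ B, g = P.Pi [y, m]) →
      ∃ q : List (L × L), (∀ r ∈ q, r.1 ∈ A ∧ r.2 ∈ B) ∧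
        (q.map fun r => P.Pi [r.1, r.2]) = w := by
  intro w
  induction w with
  | nil => intro _; exact ⟨[], by simp, rfl⟩
  | cons g t ih =>
    intro hmem
    obtain ⟨y, hy, m, hm, hgE⟩ := hmem g (by simp)
    obtain ⟨q, hq, hqe⟩ := ih (fun g' hg' => hmem g' (by simp [hg']))
    refine ⟨(y, m) :: q, ?_, ?_⟩
    · intro r hr
      rcases List.mem_cons.mp hr with rfl | hr'
      · exact ⟨hy, hm⟩
      · exact hq r hr'
    · simp [hqe, ← hgE]

section SD
variable (h : IsIntSemidirect P X N)
include h

lemma sdn_mem (S : Set L) (hS : ∀ x ∈ X, ∀ s ∈ S, P.cnj x s ∈ S) :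
    ∀ q : List (L × L), (∀ r ∈ q, r.1 ∈ X ∧ r.2 ∈ S) → (q.map Prod.fst) ∈ P.D →
      ∀ z ∈ sdn P q, z ∈ S := by
  intro q
  induction q with
  | nil => intro _ _ z hz; simp [sdn] at hz
  | cons r rest ih =>
    intro hq hD z hz
    have hrestD : rest.map Prod.fst ∈ P.D := P.append_right_mem (u := [r.1]) hD
    have hz' : z = P.cnj (P.Pi (rest.map Prod.fst)) r.2 ∨ z ∈ sdn P rest := by
      simpa [sdn] using hz
    rcases hz' with rfl | hz'
    · have hPiX : P.Pi (rest.map Prod.fst) ∈ X := h.subX.2.2 _ hrestD (by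
        intro y hy
        obtain ⟨r', hr', rfl⟩ := List.mem_map.mp hy
        exact (hq r' (by simp [hr'])).1)
      exact hS _ hPiX _ (hq r (by simp)).2
    · exact ih (fun r' hr' => hq r' (by simp [hr'])) hrestD z hz'

lemma lemA (M : Set L) (hMN : M ⊆ N) (hM : P.IsPartialNormal M) :
    P.IsPartialNormal
      {g | ∃ y ∈ {x ∈ X | ∀ n ∈ N, P.cnj x n = n}, ∃ m ∈ M, g = P.Pi [y, m]} := by
  have hCinv : ∀ y ∈ {x ∈ X | ∀ n ∈ N, P.cnj x n = n},
      P.inv y ∈ {x ∈ X | ∀ n ∈ N, P.cnj x n = n} := by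
    intro y hy
    refine ⟨h.subX.2.1 y hy.1, ?_⟩
    intro n hn
    have hmd := memD_of_X h hy.1 hn
    have h2 := (cnj_inv_cnj P hmd).2
    rw [hy.2 n hn] at h2
    show P.Pi [P.inv (P.inv y), n, P.inv y] = n
    rw [P.inv_inv]
    exact h2
  refine ⟨⟨?_, ?_, ?_⟩, ?_⟩
  · -- nonempty
    exact ⟨P.one, P.one, ⟨one_mem_sub h.subX, fun n _ => cnj_one_left P n⟩,
      P.one, one_mem_sub hM.1, (Pi_pair_one P P.one).symm⟩
  · -- inv closed
    rintro g ⟨y, hyC, m, hm, hgE⟩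
    obtain ⟨n', hn'N, hinv, hcnj⟩ := invFact h hyC.1 (hMN hm)
    rw [hyC.2 n' hn'N] at hcnj
    refine ⟨P.inv y, hCinv y hyC, n', ?_, ?_⟩
    · rw [hcnj]; exact hM.1.2.1 m hm
    · rw [hgE]; exact hinv
  · -- Pi closed
    intro w hw hmem
    obtain ⟨q, hq, hqe⟩ := exists_factor_list (P := P) _ _ w hmem
    subst hqe
    have hq' : ∀ r ∈ q, r.1 ∈ X ∧ r.2 ∈ N := fun r hr => ⟨(hq r hr).1.1, hMN (hq r hr).2⟩
    obtain ⟨hfst, hsdn⟩ := (h.sd3 q hq').1.mp hw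
    have hprod := (h.sd3 q hq').2 hw
    have hfstX : ∀ z ∈ q.map Prod.fst, z ∈ X := by
      intro z hz
      obtain ⟨r, hr, rfl⟩ := List.mem_map.mp hz
      exact (hq' r hr).1
    refine ⟨P.Pi (q.map Prod.fst), ⟨h.subX.2.2 _ hfst hfstX, ?_⟩, P.Pi (sdn P q), ?_, hprod⟩
    · intro n hn
      rw [cnj_Pi_word h _ hfst hfstX n hn]
      exact foldl_cnj_fix (X := X) (N := N) _
        (fun z hz => by obtain ⟨r, hr, rfl⟩ := List.mem_map.mp hz; exact (hq r hr).1) n hn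
    · exact hM.1.2.2 _ hsdn (sdn_mem h M
        (fun x hx s hs => hM.2 x s hs (memD_of_X h hx (hMN hs))) q
        (fun r hr => ⟨(hq' r hr).1, (hq r hr).2⟩) hfst)
  · -- normality
    intro g c hc hmd
    obtain ⟨y, hyC, m, hm, hcE⟩ := hc
    obtain ⟨⟨x, n⟩, ⟨hx, hn, hxnD, hgE⟩, -⟩ := h.sd2 g
    obtain ⟨n', hn'N, hinv, hcnj⟩ := invFact h hx hn
    rw [← hgE] at hinv
    have hq3 : ∀ r ∈ [(P.inv x, n'), (y, m), (x, n)], r.1 ∈ X ∧ r.2 ∈ N := by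
      intro r hr
      simp only [List.mem_cons, List.mem_singleton, List.not_mem_nil, or_false] at hr
      rcases hr with rfl | rfl | rfl
      · exact ⟨h.subX.2.1 x hx, hn'N⟩
      · exact ⟨hyC.1, hMN hm⟩
      · exact ⟨hx, hn⟩
    have hmap : ([(P.inv x, n'), (y, m), (x, n)].map fun r => P.Pi [r.1, r.2]) ∈ P.D := by
      show [P.Pi [P.inv x, n'], P.Pi [y, m], P.Pi [x, n]] ∈ P.D
      rw [← hinv, ← hcE, ← hgE]
      exact hmd
    obtain ⟨hfst, hsdn⟩ := (h.sd3 _ hq3).1.mp hmap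
    have hfst' : [P.inv x, y, x] ∈ P.D := hfst
    have hyx : [y, x] ∈ P.D := P.append_right_mem (u := [P.inv x]) hfst'
    have e₁ : P.cnj (P.Pi [y, x]) n' = P.inv n := by
      have e := cnj_Pi_pair h hyC.1 hx hyx hn'N
      rw [hyC.2 n' hn'N] at e
      exact e.trans hcnj
    have hsdn_eq : sdn P [(P.inv x, n'), (y, m), (x, n)] = [P.inv n, P.cnj x m, n] := by
      simp [sdn, P.Pi_singleton, cnj_Pi_nil, e₁]
    have hsdnD : [P.inv n, P.cnj x m, n] ∈ P.D := by rwa [hsdn_eq] at hsdn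
    have hm₁ : P.cnj x m ∈ M := hM.2 x m hm (memD_of_X h hx (hMN hm))
    have hBM : P.Pi (sdn P [(P.inv x, n'), (y, m), (x, n)]) ∈ M := by
      rw [hsdn_eq]
      exact hM.2 n (P.cnj x m) hm₁ hsdnD
    have hprod := (h.sd3 _ hq3).2 hmap
    have hprod' : P.Pi [P.Pi [P.inv x, n'], P.Pi [y, m], P.Pi [x, n]] =
        P.Pi [P.Pi ([(P.inv x, n'), (y, m), (x, n)].map Prod.fst),
          P.Pi (sdn P [(P.inv x, n'), (y, m), (x, n)])] := hprod
    rw [← hinv, ← hcE, ← hgE] at hprod'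
    have hfstX : ∀ z ∈ [(P.inv x, n'), (y, m), (x, n)].map Prod.fst, z ∈ X := by
      intro z hz
      obtain ⟨r, hr, rfl⟩ := List.mem_map.mp hz
      exact (hq3 r hr).1
    refine ⟨P.Pi ([(P.inv x, n'), (y, m), (x, n)].map Prod.fst),
      ⟨h.subX.2.2 _ hfst hfstX, ?_⟩,
      P.Pi (sdn P [(P.inv x, n'), (y, m), (x, n)]), hBM, hprod'⟩
    intro n₀ hn₀
    rw [cnj_Pi_word h _ hfst hfstX n₀ hn₀]
    show List.foldl (fun a z => P.cnj z a) n₀ [P.inv x, y, x] = n₀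
    simp only [List.foldl]
    rw [hyC.2 _ (cnj_mem_N h (h.subX.2.1 x hx) hn₀)]
    have hmd2 : [P.inv (P.inv x), n₀, P.inv x] ∈ P.D := memD_of_X h (h.subX.2.1 x hx) hn₀
    have h2 := (cnj_inv_cnj P hmd2).2
    rw [P.inv_inv] at h2
    exact h2

end SD
end PGLemmas
namespace PGLemmas

section SD
variable {L : Type u} {P : PartialGroup L} {X N : Set L} (h : IsIntSemidirect P X N)
include h

lemma N_normal : P.IsPartialNormal N := by
  refine ⟨h.subN, ?_⟩
  intro g n₀ hn₀ hmd
  obtain ⟨⟨x, n⟩, ⟨hx, hn, hxnD, hgE⟩, -⟩ := h.sd2 g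
  obtain ⟨n', hn'N, hinv, -⟩ := invFact h hx hn
  rw [← hgE] at hinv
  have hq : ∀ r ∈ [(P.inv x, n'), (P.one, n₀), (x, n)], r.1 ∈ X ∧ r.2 ∈ N := by
    intro r hr
    simp only [List.mem_cons, List.mem_singleton, List.not_mem_nil, or_false] at hr
    rcases hr with rfl | rfl | rfl
    · exact ⟨h.subX.2.1 x hx, hn'N⟩
    · exact ⟨one_mem_sub h.subX, hn₀⟩
    · exact ⟨hx, hn⟩
  have hmap : ([(P.inv x, n'), (P.one, n₀), (x, n)].map fun r => P.Pi [r.1, r.2]) ∈ P.D := by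
    show [P.Pi [P.inv x, n'], P.Pi [P.one, n₀], P.Pi [x, n]] ∈ P.D
    rw [← hinv, Pi_one_cons, ← hgE]
    exact hmd
  obtain ⟨hfst, hsdn⟩ := (h.sd3 _ hq).1.mp hmap
  have hsdn_eq : sdn P [(P.inv x, n'), (P.one, n₀), (x, n)] =
      [P.cnj x n', P.cnj x n₀, n] := by
    simp [sdn, P.Pi_singleton, cnj_Pi_nil, Pi_one_cons]
  have hsdnN : P.Pi (sdn P [(P.inv x, n'), (P.one, n₀), (x, n)]) ∈ N :=
    h.subN.2.2 _ hsdn (by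
      intro z hz
      rw [hsdn_eq] at hz
      simp only [List.mem_cons, List.mem_singleton, List.not_mem_nil, or_false] at hz
      rcases hz with rfl | rfl | rfl
      · exact cnj_mem_N h hx hn'N
      · exact cnj_mem_N h hx hn₀
      · exact hn)
  have efst : P.Pi [P.inv x, P.one, x] = P.one :=
    (P.pg3_eq [P.inv x] [] [x] (invg_g P x).1).symm.trans (invg_g P x).2
  have hprod := (h.sd3 _ hq).2 hmap
  have hprod' : P.Pi [P.Pi [P.inv x, n'], P.Pi [P.one, n₀], P.Pi [x, n]] =
      P.Pi [P.Pi [P.inv x, P.one, x],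
        P.Pi (sdn P [(P.inv x, n'), (P.one, n₀), (x, n)])] := hprod
  rw [← hinv, Pi_one_cons, ← hgE, efst, Pi_one_cons] at hprod'
  show P.Pi [P.inv g, n₀, g] ∈ N
  rw [hprod']
  exact hsdnN

omit h in
lemma one_normal : P.IsPartialNormal {P.one} := by
  refine ⟨⟨⟨P.one, rfl⟩, ?_, ?_⟩, ?_⟩
  · intro g hg
    rw [Set.mem_singleton_iff] at hg ⊢
    rw [hg, inv_one]
  · intro w hw hall
    rw [Set.mem_singleton_iff]
    exact Pi_all_one P w hw (fun z hz => hall z hz)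
  · intro g n hn _
    rw [Set.mem_singleton_iff] at hn ⊢
    rw [hn]
    exact cnj_one P g

end SD
end PGLemmas
open PGLemmas

theorem stmt15 {L : Type u} (P : PartialGroup L) (X N : Set L)
    (h : IsIntSemidirect P X N) (M : Set L) (hMN : M ⊆ N) (hM : P.IsPartialNormal M) :
    P.IsPartialNormal
      {g | ∃ y ∈ {x ∈ X | ∀ n ∈ N, P.cnj x n = n}, ∃ m ∈ M, g = P.Pi [y, m]} ∧
    P.IsPartialNormal {x ∈ X | ∀ n ∈ N, P.cnj x n = n} ∧
    P.IsPartialNormal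
      {g | ∃ y ∈ {x ∈ X | ∀ n ∈ N, P.cnj x n = n}, ∃ m ∈ N, g = P.Pi [y, m]} := by
  refine ⟨lemA h M hMN hM, ?_, lemA h N subset_rfl (N_normal h)⟩
  have h1 := lemA h {P.one} (by
      intro z hz
      rw [Set.mem_singleton_iff] at hz
      rw [hz]
      exact one_mem_sub h.subN) one_normal
  have hset : {g | ∃ y ∈ {x ∈ X | ∀ n ∈ N, P.cnj x n = n}, ∃ m ∈ ({P.one} : Set L),
      g = P.Pi [y, m]} = {x ∈ X | ∀ n ∈ N, P.cnj x n = n} := by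
    ext g
    constructor
    · rintro ⟨y, hy, m, hm, rfl⟩
      rw [Set.mem_singleton_iff] at hm
      subst hm
      rw [Pi_pair_one]
      exact hy
    · intro hg
      exact ⟨g, hg, P.one, rfl, (Pi_pair_one P g).symm⟩
  rwa [hset] at h1
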